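/- Let Ω ⊆ ℝ³ be an open set and ω ∈ ℂ with ω ≠ 0. Let μ : Ω → ℂ^{3×3} be of class C², ε : Ω → ℂ^{3×3} of class C¹, and let E, H : Ω → ℂ³ be of class C², J_m : Ω → ℂ³ of class C² and J_e : Ω → ℂ³ of class C¹. Assume the time-harmonic Maxwell system holds pointwise on Ω: curl H = iωεE + J_e and curl E = −iωμH + J_m. Then for each k ∈ {1,2,3} the k-th component H_k of H satisfies, pointwise on Ω, the second-order divergence-form equation −div(μ∇H_k) = div((∂_k μ)H − μ(e_k × (J_e + iωεE)) + (i/ω) e_k div J_m), where ∇H_k = (∂₁H_k, ∂₂H_k, ∂₃H_k). -/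

import Mathlib

open Matrix MeasureTheory

noncomputable section

/-- Partial derivative of a scalar function in the j-th coordinate direction. -/
def pd3 (j : Fin 3) (f : (Fin 3 → ℝ) → ℂ) (x : Fin 3 → ℝ) : ℂ :=
  fderiv ℝ f x (Pi.single j 1)

/-- Divergence of a vector field. -/
def vdiv (F : (Fin 3 → ℝ) → Fin 3 → ℂ) (x : Fin 3 → ℝ) : ℂ :=
  ∑ j : Fin 3, pd3 j (fun y => F y j) x

/-- Curl of a vector field. -/
def vcurl (F : (Fin 3 → ℝ) → Fin 3 → ℂ) (x : Fin 3 → ℝ) : Fin 3 → ℂ :=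
  ![pd3 1 (fun y => F y 2) x - pd3 2 (fun y => F y 1) x,
    pd3 2 (fun y => F y 0) x - pd3 0 (fun y => F y 2) x,
    pd3 0 (fun y => F y 1) x - pd3 1 (fun y => F y 0) x]

/-- Gradient of a scalar function. -/
def grad3 (u : (Fin 3 → ℝ) → ℂ) (x : Fin 3 → ℝ) : Fin 3 → ℂ := fun j => pd3 j u x

/-- Cross product on ℂ³. -/
def cross3 (a b : Fin 3 → ℂ) : Fin 3 → ℂ :=
  ![a 1 * b 2 - a 2 * b 1, a 2 * b 0 - a 0 * b 2, a 0 * b 1 - a 1 * b 0]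

/-- The k-th standard basis vector of ℝ³ viewed in ℂ³. -/
def e3 (k : Fin 3) : Fin 3 → ℂ := Pi.single k 1

/-- Entrywise partial derivative of a matrix field in the k-th direction. -/
def mpd3 (k : Fin 3) (a : (Fin 3 → ℝ) → Matrix (Fin 3) (Fin 3) ℂ) (x : Fin 3 → ℝ) :
    Matrix (Fin 3) (Fin 3) ℂ :=
  Matrix.of fun i j => pd3 k (fun y => a y i j) x

/-!
With `curl H = Je + iωεE`, the identity `eₖ × curl H = ∇Hₖ - ∂ₖH` and the product rule
`∂ₖ(μH) = (∂ₖμ)H + μ ∂ₖH` turn the flux on the right into `∂ₖ(μH) - μ∇Hₖ + (i/ω)(div Jm) eₖ`.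
By symmetry of second derivatives its divergence is
`∂ₖ div(μH) - div(μ∇Hₖ) + (i/ω) ∂ₖ div Jm`, and taking the divergence of
`curl E = -iωμH + Jm` gives `div(μH) = (iω)⁻¹ div Jm = -(i/ω) div Jm`, so the first and last
terms cancel.
-/

open Topology

section PartialDerivatives

variable {f g : (Fin 3 → ℝ) → ℂ} {x : Fin 3 → ℝ}

lemma pd3_congr_of_eventuallyEq (h : f =ᶠ[𝓝 x] g) (j : Fin 3) : pd3 j f x = pd3 j g x := by
  rw [pd3, pd3, h.fderiv_eq]

lemma pd3_add (hf : DifferentiableAt ℝ f x) (hg : DifferentiableAt ℝ g x) (j : Fin 3) :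
    pd3 j (fun y => f y + g y) x = pd3 j f x + pd3 j g x := by
  simp [pd3, fderiv_fun_add hf hg]

lemma pd3_sub (hf : DifferentiableAt ℝ f x) (hg : DifferentiableAt ℝ g x) (j : Fin 3) :
    pd3 j (fun y => f y - g y) x = pd3 j f x - pd3 j g x := by
  simp [pd3, fderiv_fun_sub hf hg]

lemma pd3_neg (j : Fin 3) : pd3 j (fun y => -f y) x = -pd3 j f x := by
  simp [pd3, fderiv_fun_neg]

lemma pd3_const_mul (hf : DifferentiableAt ℝ f x) (c : ℂ) (j : Fin 3) :
    pd3 j (fun y => c * f y) x = c * pd3 j f x := by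
  simp [pd3, fderiv_const_mul hf c]

lemma pd3_mul (hf : DifferentiableAt ℝ f x) (hg : DifferentiableAt ℝ g x) (j : Fin 3) :
    pd3 j (fun y => f y * g y) x = pd3 j f x * g x + f x * pd3 j g x := by
  simp [pd3, fderiv_fun_mul hf hg, add_comm, mul_comm]

lemma pd3_sum {ι : Type*} {s : Finset ι} {F : ι → (Fin 3 → ℝ) → ℂ}
    (hF : ∀ i ∈ s, DifferentiableAt ℝ (F i) x) (j : Fin 3) :
    pd3 j (fun y => ∑ i ∈ s, F i y) x = ∑ i ∈ s, pd3 j (F i) x := by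
  simp [pd3, fderiv_fun_sum hF]

lemma contDiffAt_pd3 {n : ℕ∞} (hf : ContDiffAt ℝ (n + 1) f x) (j : Fin 3) :
    ContDiffAt ℝ n (pd3 j f) x :=
  (hf.fderiv_right le_rfl).clm_apply contDiffAt_const

lemma differentiableAt_pd3 (hf : ContDiffAt ℝ 2 f x) (j : Fin 3) :
    DifferentiableAt ℝ (pd3 j f) x :=
  (contDiffAt_pd3 (n := 1) hf j).differentiableAt one_ne_zero

lemma pd3_pd3_comm (hf : ContDiffAt ℝ 2 f x) (i j : Fin 3) :
    pd3 i (pd3 j f) x = pd3 j (pd3 i f) x := by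
  have hd : DifferentiableAt ℝ (fderiv ℝ f) x :=
    (hf.fderiv_right (m := 1) le_rfl).differentiableAt one_ne_zero
  unfold pd3
  rw [fderiv_clm_apply hd (differentiableAt_const _),
    fderiv_clm_apply hd (differentiableAt_const _)]
  simpa using (hf.isSymmSndFDerivAt (by simp)) (Pi.single i 1) (Pi.single j 1)

end PartialDerivatives

lemma ContDiffAt.mulVec {𝕜 E 𝔸 : Type*} [NontriviallyNormedField 𝕜] [NormedAddCommGroup E]
    [NormedSpace 𝕜 E] [NormedRing 𝔸] [NormedAlgebra 𝕜 𝔸] {m n : Type*} [Fintype m] [Fintype n]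
    {N : ℕ∞} {A : E → Matrix m n 𝔸} {v : E → n → 𝔸} {x : E}
    (hA : ∀ i j, ContDiffAt 𝕜 N (fun y => A y i j) x) (hv : ContDiffAt 𝕜 N v x) :
    ContDiffAt 𝕜 N (fun y => A y *ᵥ v y) x :=
  contDiffAt_pi.2 fun i =>
    ContDiffAt.sum fun j _ => (hA i j).mul (contDiffAt_pi.1 hv j)

def vpd3 (k : Fin 3) (F : (Fin 3 → ℝ) → Fin 3 → ℂ) (x : Fin 3 → ℝ) : Fin 3 → ℂ :=
  fun j => pd3 k (fun y => F y j) x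

section VectorFields

variable {F G : (Fin 3 → ℝ) → Fin 3 → ℂ} {x : Fin 3 → ℝ}

lemma contDiffAt_vpd3 {n : ℕ∞} (hF : ContDiffAt ℝ (n + 1) F x) (k : Fin 3) :
    ContDiffAt ℝ n (vpd3 k F) x :=
  contDiffAt_pi.2 fun j => contDiffAt_pd3 (contDiffAt_pi.1 hF j) k

lemma contDiffAt_grad3 {n : ℕ∞} {u : (Fin 3 → ℝ) → ℂ} (hu : ContDiffAt ℝ (n + 1) u x) :
    ContDiffAt ℝ n (grad3 u) x :=
  contDiffAt_pi.2 fun j => contDiffAt_pd3 hu j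

lemma differentiableAt_vdiv (hF : ContDiffAt ℝ 2 F x) : DifferentiableAt ℝ (vdiv F) x := by
  unfold vdiv
  exact DifferentiableAt.fun_sum fun j _ => differentiableAt_pd3 (contDiffAt_pi.1 hF j) j

lemma vdiv_congr_of_eventuallyEq (h : F =ᶠ[𝓝 x] G) : vdiv F x = vdiv G x :=
  Finset.sum_congr rfl fun j _ => pd3_congr_of_eventuallyEq (h.mono fun _ hy => congrFun hy j) j

lemma vdiv_add (hF : DifferentiableAt ℝ F x) (hG : DifferentiableAt ℝ G x) :
    vdiv (fun y => F y + G y) x = vdiv F x + vdiv G x := by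
  simp only [vdiv, Pi.add_apply, ← Finset.sum_add_distrib]
  exact Finset.sum_congr rfl fun j _ =>
    pd3_add (differentiableAt_pi.1 hF j) (differentiableAt_pi.1 hG j) j

lemma vdiv_sub (hF : DifferentiableAt ℝ F x) (hG : DifferentiableAt ℝ G x) :
    vdiv (fun y => F y - G y) x = vdiv F x - vdiv G x := by
  simp only [vdiv, Pi.sub_apply, ← Finset.sum_sub_distrib]
  exact Finset.sum_congr rfl fun j _ =>
    pd3_sub (differentiableAt_pi.1 hF j) (differentiableAt_pi.1 hG j) j

lemma vdiv_const_smul (hF : DifferentiableAt ℝ F x) (c : ℂ) :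
    vdiv (fun y => c • F y) x = c * vdiv F x := by
  simp only [vdiv, Pi.smul_apply, smul_eq_mul, Finset.mul_sum]
  exact Finset.sum_congr rfl fun j _ => pd3_const_mul (differentiableAt_pi.1 hF j) c j

lemma vdiv_smul_e3 (f : (Fin 3 → ℝ) → ℂ) (k : Fin 3) :
    vdiv (fun y => f y • e3 k) x = pd3 k f x := by
  rw [vdiv, Finset.sum_eq_single k]
  · simp [e3]
  · intro j _ hjk
    simp [e3, hjk, pd3]
  · simp

lemma vdiv_vpd3 (hF : ContDiffAt ℝ 2 F x) (k : Fin 3) :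
    vdiv (vpd3 k F) x = pd3 k (vdiv F) x := by
  have hFj j : ContDiffAt ℝ 2 (fun y => F y j) x := contDiffAt_pi.1 hF j
  unfold vdiv vpd3
  rw [pd3_sum fun j _ => differentiableAt_pd3 (hFj j) j]
  exact Finset.sum_congr rfl fun j _ => pd3_pd3_comm (hFj j) j k

lemma differentiableAt_vcurl (hF : ContDiffAt ℝ 2 F x) : DifferentiableAt ℝ (vcurl F) x := by
  have h i j : DifferentiableAt ℝ (pd3 i fun y => F y j) x :=
    differentiableAt_pd3 (contDiffAt_pi.1 hF j) i
  refine differentiableAt_pi.2 fun j => ?_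
  fin_cases j
  exacts [(h 1 2).sub (h 2 1), (h 2 0).sub (h 0 2), (h 0 1).sub (h 1 0)]

lemma vdiv_vcurl (hF : ContDiffAt ℝ 2 F x) : vdiv (vcurl F) x = 0 := by
  have hFj j : ContDiffAt ℝ 2 (fun y => F y j) x := contDiffAt_pi.1 hF j
  have h i j : DifferentiableAt ℝ (pd3 i fun y => F y j) x := differentiableAt_pd3 (hFj j) i
  simp only [vdiv, vcurl, Fin.sum_univ_three, Matrix.cons_val_zero, Matrix.cons_val_one,
    Matrix.cons_val_two, Matrix.head_cons, Matrix.tail_cons]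
  rw [pd3_sub (h 1 2) (h 2 1), pd3_sub (h 2 0) (h 0 2), pd3_sub (h 0 1) (h 1 0),
    pd3_pd3_comm (hFj 2) 0 1, pd3_pd3_comm (hFj 1) 0 2, pd3_pd3_comm (hFj 0) 1 2]
  ring

lemma vdiv_eq_inv_mul_vdiv_of_vcurl_eq {Ω : Set (Fin 3 → ℝ)} (hΩ : IsOpen Ω)
    {J E : (Fin 3 → ℝ) → Fin 3 → ℂ} {c : ℂ} (hc : c ≠ 0) (hJ : ContDiffOn ℝ 1 J Ω)
    (hE : ContDiffOn ℝ 2 E Ω) (h : ∀ y ∈ Ω, vcurl E y = -(c • F y) + J y) (hx : x ∈ Ω) :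
    vdiv F x = c⁻¹ * vdiv J x := by
  have hF : F =ᶠ[𝓝 x] fun y => c⁻¹ • (J y - vcurl E y) := by
    filter_upwards [hΩ.mem_nhds hx] with y hy
    rw [h y hy, neg_add_eq_sub, sub_sub_cancel, inv_smul_smul₀ hc]
  have hJx : DifferentiableAt ℝ J x := (hJ.contDiffAt (hΩ.mem_nhds hx)).differentiableAt one_ne_zero
  have hEx : ContDiffAt ℝ 2 E x := hE.contDiffAt (hΩ.mem_nhds hx)
  rw [vdiv_congr_of_eventuallyEq hF, vdiv_const_smul (hJx.fun_sub (differentiableAt_vcurl hEx)),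
    vdiv_sub hJx (differentiableAt_vcurl hEx), vdiv_vcurl hEx, sub_zero]

lemma cross3_e3_vcurl (F : (Fin 3 → ℝ) → Fin 3 → ℂ) (y : Fin 3 → ℝ) (k : Fin 3) :
    cross3 (e3 k) (vcurl F y) = grad3 (fun z => F z k) y - vpd3 k F y := by
  ext j
  fin_cases k <;> fin_cases j <;> simp [cross3, e3, vcurl, grad3, vpd3]

lemma vpd3_mulVec {A : (Fin 3 → ℝ) → Matrix (Fin 3) (Fin 3) ℂ}
    (hA : ∀ i j, DifferentiableAt ℝ (fun y => A y i j) x)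
    (hF : DifferentiableAt ℝ F x) (k : Fin 3) :
    vpd3 k (fun y => A y *ᵥ F y) x = mpd3 k A x *ᵥ F x + A x *ᵥ vpd3 k F x := by
  ext i
  simp only [vpd3, Pi.add_apply, Matrix.mulVec, dotProduct, mpd3, Matrix.of_apply,
    ← Finset.sum_add_distrib]
  rw [pd3_sum fun j _ => (hA i j).fun_mul (differentiableAt_pi.1 hF j)]
  exact Finset.sum_congr rfl fun j _ => pd3_mul (hA i j) (differentiableAt_pi.1 hF j) k

lemma mpd3_mulVec_sub_mulVec_cross3_e3_vcurl {A : (Fin 3 → ℝ) → Matrix (Fin 3) (Fin 3) ℂ}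
    (hA : ∀ i j, DifferentiableAt ℝ (fun y => A y i j) x) (hF : DifferentiableAt ℝ F x)
    (k : Fin 3) :
    mpd3 k A x *ᵥ F x - A x *ᵥ cross3 (e3 k) (vcurl F x)
      = vpd3 k (fun y => A y *ᵥ F y) x - A x *ᵥ grad3 (fun z => F z k) x := by
  rw [cross3_e3_vcurl, Matrix.mulVec_sub, vpd3_mulVec hA hF]
  abel

end VectorFields

theorem stmt_1_general
    (Ω : Set (Fin 3 → ℝ)) (hΩ : IsOpen Ω) (ω : ℂ) (hω : ω ≠ 0)
    (ε μ : (Fin 3 → ℝ) → Matrix (Fin 3) (Fin 3) ℂ)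
    (E H Je Jm : (Fin 3 → ℝ) → Fin 3 → ℂ)
    (hμ : ∀ i j, ContDiffOn ℝ 2 (fun x => μ x i j) Ω)
    (hE : ContDiffOn ℝ 2 E Ω) (hH : ContDiffOn ℝ 2 H Ω)
    (hJm : ContDiffOn ℝ 2 Jm Ω)
    (hM1 : ∀ x ∈ Ω, vcurl H x = (Complex.I * ω) • (ε x *ᵥ E x) + Je x)
    (hM2 : ∀ x ∈ Ω, vcurl E x = -((Complex.I * ω) • (μ x *ᵥ H x)) + Jm x) :
    ∀ x ∈ Ω, ∀ k : Fin 3,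
      -vdiv (fun y => μ y *ᵥ grad3 (fun z => H z k) y) x
        = vdiv (fun y =>
            mpd3 k μ y *ᵥ H y
            - μ y *ᵥ cross3 (e3 k) (Je y + (Complex.I * ω) • (ε y *ᵥ E y))
            + ((Complex.I / ω) * vdiv Jm y) • e3 k) x := by
  intro x hx k
  have hμ' : ∀ y ∈ Ω, ∀ i j, ContDiffAt ℝ 2 (fun x => μ x i j) y :=
    fun y hy i j => (hμ i j).contDiffAt (hΩ.mem_nhds hy)
  have hH' : ∀ y ∈ Ω, ContDiffAt ℝ 2 H y := fun y hy => hH.contDiffAt (hΩ.mem_nhds hy)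
  have hMH : ContDiffAt ℝ 2 (fun y => μ y *ᵥ H y) x := .mulVec (hμ' x hx) (hH' x hx)
  have hflux : (fun y => mpd3 k μ y *ᵥ H y
        - μ y *ᵥ cross3 (e3 k) (Je y + (Complex.I * ω) • (ε y *ᵥ E y))
        + ((Complex.I / ω) * vdiv Jm y) • e3 k)
      =ᶠ[𝓝 x] fun y => vpd3 k (fun y => μ y *ᵥ H y) y - μ y *ᵥ grad3 (fun z => H z k) y
        + ((Complex.I / ω) * vdiv Jm y) • e3 k := by
    filter_upwards [hΩ.mem_nhds hx] with y hy
    rw [add_comm (Je y), ← hM1 y hy, mpd3_mulVec_sub_mulVec_cross3_e3_vcurl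
      (fun i j => (hμ' y hy i j).differentiableAt two_ne_zero)
      ((hH' y hy).differentiableAt two_ne_zero)]
  have hdivMH : vdiv (fun y => μ y *ᵥ H y) =ᶠ[𝓝 x] fun y => -((Complex.I / ω) * vdiv Jm y) := by
    filter_upwards [hΩ.mem_nhds hx] with y hy
    rw [vdiv_eq_inv_mul_vdiv_of_vcurl_eq hΩ (mul_ne_zero Complex.I_ne_zero hω)
      (hJm.of_le (by norm_num)) hE hM2 hy, mul_inv, Complex.inv_I]
    ring
  have hvpd : DifferentiableAt ℝ (vpd3 k fun y => μ y *ᵥ H y) x :=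
    (contDiffAt_vpd3 (n := 1) hMH k).differentiableAt one_ne_zero
  have hgrad : DifferentiableAt ℝ (fun y => μ y *ᵥ grad3 (fun z => H z k) y) x :=
    (ContDiffAt.mulVec (fun i j => (hμ' x hx i j).of_le (by norm_num))
      (contDiffAt_grad3 (n := 1) (contDiffAt_pi.1 (hH' x hx) k))).differentiableAt one_ne_zero
  have hsource : DifferentiableAt ℝ (fun y => ((Complex.I / ω) * vdiv Jm y) • e3 k) x :=
    ((differentiableAt_vdiv (hJm.contDiffAt (hΩ.mem_nhds hx))).const_mul _).smul_const _
  rw [vdiv_congr_of_eventuallyEq hflux, vdiv_add (hvpd.fun_sub hgrad) hsource,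
    vdiv_sub hvpd hgrad, vdiv_smul_e3, vdiv_vpd3 hMH, pd3_congr_of_eventuallyEq hdivMH, pd3_neg]
  ring

/-- Strong form of the divergence-form elliptic equation satisfied by each component of the
magnetic field (Proposition 2.1, strong form). -/
theorem stmt_1
    (Ω : Set (Fin 3 → ℝ)) (hΩ : IsOpen Ω) (ω : ℂ) (hω : ω ≠ 0)
    (ε μ : (Fin 3 → ℝ) → Matrix (Fin 3) (Fin 3) ℂ)
    (E H Je Jm : (Fin 3 → ℝ) → Fin 3 → ℂ)
    (hμ : ∀ i j, ContDiffOn ℝ 2 (fun x => μ x i j) Ω)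
    (hε : ∀ i j, ContDiffOn ℝ 1 (fun x => ε x i j) Ω)
    (hE : ContDiffOn ℝ 2 E Ω) (hH : ContDiffOn ℝ 2 H Ω)
    (hJm : ContDiffOn ℝ 2 Jm Ω) (hJe : ContDiffOn ℝ 1 Je Ω)
    (hM1 : ∀ x ∈ Ω, vcurl H x = (Complex.I * ω) • (ε x *ᵥ E x) + Je x)
    (hM2 : ∀ x ∈ Ω, vcurl E x = -((Complex.I * ω) • (μ x *ᵥ H x)) + Jm x) :
    ∀ x ∈ Ω, ∀ k : Fin 3,
      -vdiv (fun y => μ y *ᵥ grad3 (fun z => H z k) y) x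
        = vdiv (fun y =>
            mpd3 k μ y *ᵥ H y
            - μ y *ᵥ cross3 (e3 k) (Je y + (Complex.I * ω) • (ε y *ᵥ E y))
            + ((Complex.I / ω) * vdiv Jm y) • e3 k) x :=
  stmt_1_general Ω hΩ ω hω ε μ E H Je Jm hμ hE hH hJm hM1 hM2
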